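/- Let O = k[t³,t⁴,t⁵] with maximal ideal m = (t³,t⁴,t⁵), and let E ⊂ O be an ideal with dim_k(O/E) = 2 such that E contains m² and a 2-dimensional subspace W of k·t³ + k·t⁴ + k·t⁵, with W containing an element of the form t³ + a t⁴ + b t⁵. Then E⁻¹ = {f ∈ k(t) : f·E ⊂ O} equals k[t]. -/
import Mathlib


/-!
STATEMENT 14: Let O = k[t³,t⁴,t⁵] with singular maximal ideal m = (t³,t⁴,t⁵),
and let E ⊆ O be an ideal with dim_k(O/E) = 2 which contains m² and a
2-dimensional subspace W of k·t³ + k·t⁴ + k·t⁵ containing an element of the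
form t³ + a·t⁴ + b·t⁵ (and hence also a nonzero element of the form
c·t⁴ + d·t⁵).  Then E⁻¹ = {f ∈ k(t) : f·E ⊆ O} equals k[t].

We work in F = k(t) = `RatFunc k` with T = t; E is an O-submodule of F
contained in O (i.e. an ideal of O); m² is the O-module spanned by t⁶, t⁷, t⁸;
and the conclusion E⁻¹ = k[t] is expressed as E⁻¹ = O·⟨1, t, t²⟩ together with
the identification of this module with k[t] = Algebra.adjoin k {t}.
-/

open Submodule

variable (k : Type*) [Field k]

noncomputable abbrev e2T : RatFunc k := RatFunc.X

/-- O = k[t³,t⁴,t⁵] inside k(t). -/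
noncomputable def e2O : Subalgebra k (RatFunc k) :=
  Algebra.adjoin k {e2T k ^ 3, e2T k ^ 4, e2T k ^ 5}

/-- E⁻¹ = {f ∈ k(t) : f·E ⊆ O}. -/
noncomputable def e2inv (E : Submodule (e2O k) (RatFunc k)) :
    Submodule (e2O k) (RatFunc k) where
  carrier := {f | ∀ x ∈ E, f * x ∈ e2O k}
  add_mem' := fun {a b} ha hb x hx => by
    simp only [Set.mem_setOf_eq] at *
    simpa [add_mul] using add_mem (ha x hx) (hb x hx)
  zero_mem' := fun x hx => by simpa using (e2O k).zero_mem
  smul_mem' := fun c f hf x hx => by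
    simpa [Algebra.smul_def, mul_assoc] using mul_mem c.2 (hf x hx)

namespace E2Aux

open Polynomial

variable {k}

lemma coeff_mul_1 (p q : k[X]) :
    (p * q).coeff 1 = p.coeff 0 * q.coeff 1 + p.coeff 1 * q.coeff 0 := by
  rw [Polynomial.coeff_mul, Finset.Nat.sum_antidiagonal_eq_sum_range_succ_mk]
  simp [Finset.sum_range_succ]

lemma coeff_mul_2 (p q : k[X]) :
    (p * q).coeff 2 = p.coeff 0 * q.coeff 2 + p.coeff 1 * q.coeff 1 + p.coeff 2 * q.coeff 0 := by
  rw [Polynomial.coeff_mul, Finset.Nat.sum_antidiagonal_eq_sum_range_succ_mk]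
  simp [Finset.sum_range_succ, add_assoc]

variable (k) in
/-- polynomials with vanishing coefficients in degree 1 and 2 -/
noncomputable def Spoly : Subalgebra k k[X] where
  carrier := {p | p.coeff 1 = 0 ∧ p.coeff 2 = 0}
  mul_mem' := by
    rintro p q ⟨hp1, hp2⟩ ⟨hq1, hq2⟩
    refine ⟨?_, ?_⟩ <;> simp [coeff_mul_1, coeff_mul_2, hp1, hp2, hq1, hq2]
  add_mem' := by
    rintro p q ⟨hp1, hp2⟩ ⟨hq1, hq2⟩
    refine ⟨?_, ?_⟩ <;> simp [hp1, hp2, hq1, hq2]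
  algebraMap_mem' := fun a => by simp

lemma X_pow_mem (n : ℕ) (h1 : n ≠ 1) (h2 : n ≠ 2) :
    (X : k[X]) ^ n ∈ Algebra.adjoin k {(X : k[X]) ^ 3, X ^ 4, X ^ 5} := by
  revert h1 h2
  induction n using Nat.strong_induction_on with
  | _ n ih =>
    intro h1 h2
    rcases n with _|_|_|_|_|_|m
    · simpa using one_mem _
    · exact absurd rfl h1
    · exact absurd rfl h2
    · exact Algebra.subset_adjoin (by simp)
    · exact Algebra.subset_adjoin (by simp)
    · exact Algebra.subset_adjoin (by simp)
    · have hx : (X : k[X]) ^ (m + 6) = X ^ (m + 3) * X ^ 3 := by ring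
      rw [hx]
      exact mul_mem (ih (m + 3) (by omega) (by omega) (by omega))
        (Algebra.subset_adjoin (by simp))

lemma adjoin_eq_Spoly :
    Algebra.adjoin k {(X : k[X]) ^ 3, X ^ 4, X ^ 5} = Spoly k := by
  apply le_antisymm
  · apply Algebra.adjoin_le
    rintro p (rfl | rfl | rfl) <;>
      constructor <;> simp [Polynomial.coeff_X_pow]
  · rintro p ⟨hp1, hp2⟩
    rw [p.as_sum_support]
    apply Subalgebra.sum_mem
    intro i hi
    rw [← Polynomial.C_mul_X_pow_eq_monomial]
    refine mul_mem ?_ (X_pow_mem i ?_ ?_)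
    · exact Subalgebra.algebraMap_mem _ _
    · rintro rfl; exact Polynomial.mem_support_iff.mp hi hp1
    · rintro rfl; exact Polynomial.mem_support_iff.mp hi hp2

lemma mem_e2O_iff (f : RatFunc k) :
    f ∈ e2O k ↔ ∃ p : k[X], p.coeff 1 = 0 ∧ p.coeff 2 = 0 ∧
      algebraMap k[X] (RatFunc k) p = f := by
  have hmap : e2O k = (Algebra.adjoin k {(X : k[X]) ^ 3, X ^ 4, X ^ 5}).map
      (IsScalarTower.toAlgHom k k[X] (RatFunc k)) := by
    rw [AlgHom.map_adjoin]
    simp [Set.image_insert_eq, RatFunc.algebraMap_X, e2O]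
  rw [hmap, adjoin_eq_Spoly]
  constructor
  · rintro ⟨p, ⟨h1, h2⟩, rfl⟩
    exact ⟨p, h1, h2, rfl⟩
  · rintro ⟨p, h1, h2, rfl⟩
    exact ⟨p, ⟨h1, h2⟩, rfl⟩


lemma omul_mem {N : Submodule (e2O k) (RatFunc k)} {o v : RatFunc k}
    (ho : o ∈ e2O k) (hv : v ∈ N) : o * v ∈ N := by
  have := N.smul_mem ⟨o, ho⟩ hv
  simpa [Algebra.smul_def] using this

lemma ksmul_mem {N : Submodule (e2O k) (RatFunc k)} (a : k) {v : RatFunc k}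
    (hv : v ∈ N) : algebraMap k (RatFunc k) a * v ∈ N :=
  omul_mem (Subalgebra.algebraMap_mem _ a) hv

lemma T_pow_mem (n : ℕ) (h1 : n ≠ 1) (h2 : n ≠ 2) : e2T k ^ n ∈ e2O k := by
  rw [mem_e2O_iff]
  exact ⟨X ^ n, by simp [Polynomial.coeff_X_pow, Ne.symm h1],
    by simp [Polynomial.coeff_X_pow, Ne.symm h2], by simp [RatFunc.algebraMap_X]⟩

lemma spanT (m : ℕ) (hm : 6 ≤ m) :
    e2T k ^ m ∈ Submodule.span (e2O k) {e2T k ^ 6, e2T k ^ 7, e2T k ^ 8} := by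
  rcases m with _|_|_|_|_|_|_|_|_|m
  any_goals omega
  · exact subset_span (by simp)
  · exact subset_span (by simp)
  · exact subset_span (by simp)
  · have hx : e2T k ^ (m + 9) = e2T k ^ (m + 3) * e2T k ^ 6 := by ring
    rw [hx]
    exact omul_mem (T_pow_mem (m + 3) (by omega) (by omega))
      (subset_span (by simp))

lemma mul_T_pow_mem_span (q : k[X]) {j : ℕ} (hj : 6 ≤ j) :
    algebraMap k[X] (RatFunc k) q * e2T k ^ j ∈
      Submodule.span (e2O k) {e2T k ^ 6, e2T k ^ 7, e2T k ^ 8} := by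
  induction q using Polynomial.induction_on' with
  | add p q hp hq => rw [map_add, add_mul]; exact add_mem hp hq
  | monomial n a =>
    rw [← Polynomial.C_mul_X_pow_eq_monomial, map_mul, map_pow,
      RatFunc.algebraMap_C, RatFunc.algebraMap_X]
    have hx : RatFunc.C a * (RatFunc.X : RatFunc k) ^ n * e2T k ^ j
        = RatFunc.C a * e2T k ^ (n + j) := by
      simp [pow_add]; ring
    rw [hx]
    have : RatFunc.C a = algebraMap k (RatFunc k) a := rfl
    rw [this]
    exact ksmul_mem a (spanT (n + j) (by omega))

lemma Amem_span (p : k[X]) :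
    algebraMap k[X] (RatFunc k) p ∈
      Submodule.span (e2O k) {1, e2T k, e2T k ^ 2} := by
  set u : k[X] := p - C (p.coeff 1) * X - C (p.coeff 2) * X ^ 2 with hu
  have hp : p = u + C (p.coeff 1) * X + C (p.coeff 2) * X ^ 2 := by ring
  have hmem : algebraMap k[X] (RatFunc k) u ∈ e2O k := by
    rw [mem_e2O_iff]
    exact ⟨u, by simp [hu, Polynomial.coeff_X_pow], by simp [hu, Polynomial.coeff_X_pow], rfl⟩
  rw [hp]
  simp only [map_add, map_mul, map_pow, RatFunc.algebraMap_C, RatFunc.algebraMap_X]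
  have h1 : algebraMap k[X] (RatFunc k) u = algebraMap k[X] (RatFunc k) u * 1 := by ring
  refine add_mem (add_mem ?_ ?_) ?_
  · rw [h1]; exact omul_mem hmem (subset_span (by simp))
  · exact ksmul_mem _ (subset_span (by simp))
  · exact ksmul_mem _ (subset_span (by simp))

lemma aeval_T (p : k[X]) :
    Polynomial.aeval (e2T k) p = algebraMap k[X] (RatFunc k) p := by
  have := Polynomial.aeval_algHom_apply
    (IsScalarTower.toAlgHom k k[X] (RatFunc k)) X p
  simpa [RatFunc.algebraMap_X] using this


lemma C_eq (a : k) : RatFunc.C a = algebraMap k (RatFunc k) a := rfl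

lemma AC (a : k) : algebraMap k[X] (RatFunc k) (C a) = algebraMap k (RatFunc k) a := by
  rw [RatFunc.algebraMap_C, C_eq]

lemma X3_mul_mem {E : Submodule (e2O k) (RatFunc k)}
    (hm2 : Submodule.span (e2O k) {e2T k ^ 6, e2T k ^ 7, e2T k ^ 8} ≤ E)
    (h3 : e2T k ^ 3 ∈ E) (h4 : e2T k ^ 4 ∈ E) (h5 : e2T k ^ 5 ∈ E)
    (r : k[X]) : algebraMap k[X] (RatFunc k) (X ^ 3 * r) ∈ E := by
  induction r using Polynomial.induction_on' with
  | add p q hp hq => rw [mul_add, map_add]; exact add_mem hp hq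
  | monomial n a =>
    rw [← Polynomial.C_mul_X_pow_eq_monomial]
    have hx : (X : k[X]) ^ 3 * (C a * X ^ n) = C a * X ^ (n + 3) := by ring
    rw [hx, map_mul, map_pow, AC, RatFunc.algebraMap_X]
    have hT : (RatFunc.X : RatFunc k) ^ (n + 3) ∈ E := by
      rcases n with _|_|_|m
      · exact h3
      · exact h4
      · exact h5
      · exact hm2 (spanT (m + 6) (by omega))
    exact ksmul_mem a hT

end E2Aux

theorem inverse_of_colength_two_ideal
    (E : Submodule (e2O k) (RatFunc k))
    -- E is an ideal of O:
    (hEO : ∀ f ∈ E, f ∈ e2O k)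
    -- dim_k (O/E) = 2:
    (hdim : Module.finrank k
      (↥(Subalgebra.toSubmodule (e2O k)) ⧸
        (Submodule.comap (Subalgebra.toSubmodule (e2O k)).subtype
          (E.restrictScalars k))) = 2)
    -- E contains m² = (t⁶, t⁷, t⁸):
    (hm2 : Submodule.span (e2O k) {e2T k ^ 6, e2T k ^ 7, e2T k ^ 8} ≤ E)
    -- E contains an element t³ + a t⁴ + b t⁵ of W:
    (a b : k)
    (h1 : e2T k ^ 3 + algebraMap k (RatFunc k) a * e2T k ^ 4
        + algebraMap k (RatFunc k) b * e2T k ^ 5 ∈ E)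
    -- and a nonzero element c t⁴ + d t⁵ of W:
    (c d : k) (hcd : ¬(c = 0 ∧ d = 0))
    (h2 : algebraMap k (RatFunc k) c * e2T k ^ 4
        + algebraMap k (RatFunc k) d * e2T k ^ 5 ∈ E) :
    e2inv k E = Submodule.span (e2O k) {1, e2T k, e2T k ^ 2} ∧
    (∀ f : RatFunc k, f ∈ e2inv k E ↔ f ∈ Algebra.adjoin k {e2T k}) := by
  classical
  have hCa := @E2Aux.C_eq k _
  -- T^6, T^7 are in E
  have hT6E : e2T k ^ 6 ∈ E := hm2 (subset_span (by simp))
  have hT7E : e2T k ^ 7 ∈ E := hm2 (subset_span (by simp))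
  -- Step 1: every element of E is divisible by T^3
  have hconst : ∀ x ∈ E, ∀ p : Polynomial k,
      algebraMap (Polynomial k) (RatFunc k) p = x → p.coeff 0 = 0 := by
    intro x hx p hp
    by_contra hp0
    obtain ⟨q, hq1, hq2, hq⟩ := (E2Aux.mem_e2O_iff x).mp (hEO x hx)
    have hpq : q = p := RatFunc.algebraMap_injective k (by rw [hp, hq])
    subst hpq
    obtain ⟨r, hr⟩ : (Polynomial.X : Polynomial k) ^ 3 ∣ (q - Polynomial.C (q.coeff 0)) := by
      rw [Polynomial.X_pow_dvd_iff]
      intro d hd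
      interval_cases d <;> simp [hq1, hq2]
    have hqdec : q = Polynomial.C (q.coeff 0) + Polynomial.X ^ 3 * r := by
      rw [← hr]; ring
    have hTj : ∀ j : ℕ, 3 ≤ j → j ≤ 5 → e2T k ^ j ∈ E := by
      intro j h3 h5
      have hTx : e2T k ^ j * x ∈ E :=
        E2Aux.omul_mem (E2Aux.T_pow_mem j (by omega) (by omega)) hx
      have hsplit : e2T k ^ j * x
          = algebraMap k (RatFunc k) (q.coeff 0) * e2T k ^ j
            + algebraMap (Polynomial k) (RatFunc k) r * e2T k ^ (j + 3) := by
        rw [← hp]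
        conv_lhs => rw [hqdec]
        simp only [map_add, map_mul, map_pow, E2Aux.AC, RatFunc.algebraMap_X, pow_add]
        ring
      have hmE : algebraMap (Polynomial k) (RatFunc k) r * e2T k ^ (j + 3) ∈ E :=
        hm2 (E2Aux.mul_T_pow_mem_span r (by omega))
      rw [hsplit] at hTx
      have hc : algebraMap k (RatFunc k) (q.coeff 0) * e2T k ^ j ∈ E := by
        simpa using E.sub_mem hTx hmE
      have := E2Aux.ksmul_mem (q.coeff 0)⁻¹ hc
      rwa [← mul_assoc, ← map_mul, inv_mul_cancel₀ hp0, map_one, one_mul] at this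
    have h1E : (1 : RatFunc k) ∈ E := by
      have hX3r : algebraMap (Polynomial k) (RatFunc k) (Polynomial.X ^ 3 * r) ∈ E :=
        E2Aux.X3_mul_mem hm2 (hTj 3 le_rfl (by omega)) (hTj 4 (by omega) (by omega))
          (hTj 5 (by omega) le_rfl) r
      have hcE : algebraMap k (RatFunc k) (q.coeff 0) * 1 ∈ E := by
        have hx' : algebraMap k (RatFunc k) (q.coeff 0) * 1
            = x - algebraMap (Polynomial k) (RatFunc k) (Polynomial.X ^ 3 * r) := by
          rw [← hp]
          conv_rhs => rw [hqdec]
          simp only [map_add, map_mul, map_pow, E2Aux.AC, RatFunc.algebraMap_X]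
          ring
        rw [hx']
        exact E.sub_mem hx hX3r
      have := E2Aux.ksmul_mem (q.coeff 0)⁻¹ hcE
      rwa [← mul_assoc, ← map_mul, inv_mul_cancel₀ hp0, map_one, one_mul] at this
    have htop : Submodule.comap (Subalgebra.toSubmodule (e2O k)).subtype
        (E.restrictScalars k) = ⊤ := by
      rw [eq_top_iff]
      rintro ⟨y, hy⟩ -
      simp only [Submodule.mem_comap, Submodule.restrictScalars_mem, Submodule.subtype_apply]
      simpa using E2Aux.omul_mem hy h1E
    rw [htop] at hdim
    have hsub : Subsingleton (↥(Subalgebra.toSubmodule (e2O k)) ⧸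
        (⊤ : Submodule k ↥(Subalgebra.toSubmodule (e2O k)))) :=
      Submodule.Quotient.subsingleton_iff.mpr rfl
    rw [Module.finrank_zero_of_subsingleton] at hdim
    exact two_ne_zero hdim.symm
  have hE3 : ∀ x ∈ E, ∃ r : Polynomial k,
      algebraMap (Polynomial k) (RatFunc k) (Polynomial.X ^ 3 * r) = x := by
    intro x hx
    obtain ⟨p, h1', h2', hp⟩ := (E2Aux.mem_e2O_iff x).mp (hEO x hx)
    have h0 := hconst x hx p hp
    obtain ⟨r, hr⟩ : (Polynomial.X : Polynomial k) ^ 3 ∣ p := by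
      rw [Polynomial.X_pow_dvd_iff]
      intro d hd
      interval_cases d <;> assumption
    exact ⟨r, by rw [← hr, hp]⟩
  -- Step 2: span {1, T, T²} ≤ E⁻¹
  have hge : Submodule.span (e2O k) {1, e2T k, e2T k ^ 2} ≤ e2inv k E := by
    rw [Submodule.span_le]
    rintro g (rfl | rfl | rfl) <;> intro x hx <;>
      obtain ⟨r, rfl⟩ := hE3 x hx
    · rw [one_mul]
      exact hEO _ hx
    · rw [E2Aux.mem_e2O_iff]
      refine ⟨Polynomial.X ^ 4 * r, ?_, ?_, ?_⟩
      · exact Polynomial.X_pow_dvd_iff.mp ⟨r, rfl⟩ 1 (by omega)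
      · exact Polynomial.X_pow_dvd_iff.mp ⟨r, rfl⟩ 2 (by omega)
      · simp only [map_mul, map_pow, RatFunc.algebraMap_X]
        ring
    · rw [E2Aux.mem_e2O_iff]
      refine ⟨Polynomial.X ^ 5 * r, ?_, ?_, ?_⟩
      · exact Polynomial.X_pow_dvd_iff.mp ⟨r, rfl⟩ 1 (by omega)
      · exact Polynomial.X_pow_dvd_iff.mp ⟨r, rfl⟩ 2 (by omega)
      · simp only [map_mul, map_pow, RatFunc.algebraMap_X]
        ring
  -- Step 3: E⁻¹ ≤ span {1, T, T²}
  have hle : e2inv k E ≤ Submodule.span (e2O k) {1, e2T k, e2T k ^ 2} := by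
    intro f hf
    obtain ⟨g, hg1, hg2, hg⟩ := (E2Aux.mem_e2O_iff _).mp (hf _ hT6E)
    obtain ⟨h, hh1, hh2, hh⟩ := (E2Aux.mem_e2O_iff _).mp (hf _ hT7E)
    have hhg : h = g * Polynomial.X := by
      apply RatFunc.algebraMap_injective k
      rw [hh, map_mul, RatFunc.algebraMap_X, hg]
      ring
    have hg0 : g.coeff 0 = 0 := by
      have := hh1
      rw [hhg, Polynomial.coeff_mul_X] at this
      exact this
    obtain ⟨r, hr⟩ : (Polynomial.X : Polynomial k) ^ 3 ∣ g := by
      rw [Polynomial.X_pow_dvd_iff]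
      intro d hd
      interval_cases d <;> assumption
    have hfT3 : f * e2T k ^ 3 = algebraMap (Polynomial k) (RatFunc k) r := by
      have hTne : (e2T k) ^ 3 ≠ 0 := pow_ne_zero _ RatFunc.X_ne_zero
      apply mul_right_cancel₀ hTne
      calc f * e2T k ^ 3 * e2T k ^ 3 = f * e2T k ^ 6 := by ring
        _ = algebraMap (Polynomial k) (RatFunc k) g := hg.symm
        _ = algebraMap (Polynomial k) (RatFunc k) r * e2T k ^ 3 := by
            rw [hr, map_mul, map_pow, RatFunc.algebraMap_X]; ring
    -- w1 conditions
    obtain ⟨h₁, hw11, hw12, hw1e⟩ := (E2Aux.mem_e2O_iff _).mp (hf _ h1)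
    have hprod1 : h₁ = r * (1 + Polynomial.C a * Polynomial.X
        + Polynomial.C b * Polynomial.X ^ 2) := by
      apply RatFunc.algebraMap_injective k
      rw [hw1e]
      simp only [map_mul, map_add, map_one, map_pow, E2Aux.AC, RatFunc.algebraMap_X]
      rw [← hfT3]
      ring
    rw [hprod1, E2Aux.coeff_mul_1] at hw11
    rw [hprod1, E2Aux.coeff_mul_2] at hw12
    simp only [Polynomial.coeff_add, Polynomial.coeff_one, Polynomial.coeff_C_mul,
      Polynomial.coeff_X, Polynomial.coeff_X_pow] at hw11 hw12
    norm_num at hw11 hw12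
    -- w2 conditions
    obtain ⟨h₂, hw21, hw22, hw2e⟩ := (E2Aux.mem_e2O_iff _).mp (hf _ h2)
    have hprod2 : h₂ = r * (Polynomial.C c * Polynomial.X
        + Polynomial.C d * Polynomial.X ^ 2) := by
      apply RatFunc.algebraMap_injective k
      rw [hw2e]
      simp only [map_mul, map_add, map_one, map_pow, E2Aux.AC, RatFunc.algebraMap_X]
      rw [← hfT3]
      ring
    rw [hprod2, E2Aux.coeff_mul_1] at hw21
    rw [hprod2, E2Aux.coeff_mul_2] at hw22
    simp only [Polynomial.coeff_add, Polynomial.coeff_one, Polynomial.coeff_C_mul,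
      Polynomial.coeff_X, Polynomial.coeff_X_pow] at hw21 hw22
    norm_num at hw21 hw22
    -- deduce r₀ = r₁ = r₂ = 0
    have hr0 : r.coeff 0 = 0 := by
      by_cases hc : c = 0
      · have hd : d ≠ 0 := fun hd => hcd ⟨hc, hd⟩
        subst hc
        simp only [mul_zero, zero_add, add_zero, mul_eq_zero] at hw22
        rcases hw22 with h | h
        · exact h
        · exact absurd h hd
      · rcases hw21 with h | h
        · exact h
        · exact absurd h hc
    have hr1 : r.coeff 1 = 0 := by
      rw [hr0] at hw11
      simpa using hw11
    have hr2 : r.coeff 2 = 0 := by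
      rw [hr0, hr1] at hw12
      simpa using hw12
    obtain ⟨s, hs⟩ : (Polynomial.X : Polynomial k) ^ 3 ∣ r := by
      rw [Polynomial.X_pow_dvd_iff]
      intro d hd
      interval_cases d <;> assumption
    have hfs : f = algebraMap (Polynomial k) (RatFunc k) s := by
      have hTne : (e2T k) ^ 3 ≠ 0 := pow_ne_zero _ RatFunc.X_ne_zero
      apply mul_right_cancel₀ hTne
      rw [hfT3, hs, map_mul, map_pow, RatFunc.algebraMap_X]
      ring
    rw [hfs]
    exact E2Aux.Amem_span s
  have heq : e2inv k E = Submodule.span (e2O k) {1, e2T k, e2T k ^ 2} :=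
    le_antisymm hle hge
  refine ⟨heq, fun f => ?_⟩
  rw [heq]
  constructor
  · intro hfs
    have hrep : ∀ g ∈ Submodule.span (e2O k) {1, e2T k, e2T k ^ 2},
        ∃ p : Polynomial k, algebraMap (Polynomial k) (RatFunc k) p = g := by
      intro g hg
      induction hg using Submodule.span_induction with
      | mem x hx =>
        simp only [Set.mem_insert_iff, Set.mem_singleton_iff] at hx
        rcases hx with rfl | rfl | rfl
        · exact ⟨1, map_one _⟩
        · exact ⟨Polynomial.X, RatFunc.algebraMap_X⟩
        · exact ⟨Polynomial.X ^ 2, by rw [map_pow, RatFunc.algebraMap_X]⟩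
      | zero => exact ⟨0, map_zero _⟩
      | add x y _ _ hx hy =>
        obtain ⟨p, rfl⟩ := hx
        obtain ⟨q, rfl⟩ := hy
        exact ⟨p + q, map_add _ _ _⟩
      | smul o x _ hx =>
        obtain ⟨p, rfl⟩ := hx
        obtain ⟨q, _, _, hq⟩ := (E2Aux.mem_e2O_iff (o : RatFunc k)).mp o.2
        exact ⟨q * p, by rw [map_mul, hq, Algebra.smul_def]; rfl⟩
    obtain ⟨p, rfl⟩ := hrep f hfs
    rw [Algebra.adjoin_singleton_eq_range_aeval]
    exact ⟨p, E2Aux.aeval_T p⟩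
  · intro hfa
    rw [Algebra.adjoin_singleton_eq_range_aeval] at hfa
    obtain ⟨p, hp⟩ := hfa
    rw [← hp, show ((Polynomial.aeval (e2T k)).toRingHom p : RatFunc k)
      = Polynomial.aeval (e2T k) p from rfl, E2Aux.aeval_T]
    exact E2Aux.Amem_span p
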